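/- arXiv:1003.3170 — 7 statements merged into one kernel-verified Lean document; each statement's English description precedes it below -/
import Mathlib

section
/- For the cross product ⋆ on ℝ⁷ defined from the standard G₂ 3-form ρ₀, one has |x ⋆ y|² = |x|²·|y|² − ⟨x,y⟩² for all x, y ∈ ℝ⁷. -/
noncomputable section

/-- `eⁱ ∧ eʲ ∧ eᵏ` evaluated at `(x, y, z)` (a 3×3 determinant of coordinates). -/
def tripleForm (i j k : Fin 7) (x y z : Fin 7 → ℝ) : ℝ :=
  x i * (y j * z k - y k * z j) - x j * (y i * z k - y k * z i)
    + x k * (y i * z j - y j * z i)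

/-- The standard G₂ 3-form on ℝ⁷:
`ρ₀ = e¹∧e²∧e³ + e¹∧e⁴∧e⁵ + e¹∧e⁶∧e⁷ + e²∧e⁴∧e⁶ − e²∧e⁵∧e⁷ − e³∧e⁴∧e⁷ − e³∧e⁵∧e⁶`
(indices shifted down by one to `Fin 7`). -/
def rho (x y z : Fin 7 → ℝ) : ℝ :=
  tripleForm 0 1 2 x y z + tripleForm 0 3 4 x y z + tripleForm 0 5 6 x y z
    + tripleForm 1 3 5 x y z - tripleForm 1 4 6 x y z - tripleForm 2 3 6 x y z
    - tripleForm 2 4 5 x y z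

/-- The standard inner product on ℝ⁷. -/
def inn (x y : Fin 7 → ℝ) : ℝ := ∑ i, x i * y i

/-- The cross product on ℝ⁷ determined by `ρ₀`: the unique vector with
`⟨x ⋆ y, z⟩ = ρ₀ (x, y, z)`; its `i`-th coordinate is `ρ₀ (x, y, eᵢ)`. -/
def cross (x y : Fin 7 → ℝ) : Fin 7 → ℝ := fun i => rho x y (Pi.single i 1)

lemma inn_expand (x y : Fin 7 → ℝ) :
    inn x y = x 0 * y 0 + x 1 * y 1 + x 2 * y 2 + x 3 * y 3 + x 4 * y 4
      + x 5 * y 5 + x 6 * y 6 := by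
  simp [inn, Fin.sum_univ_seven]

lemma cross_coord (x y : Fin 7 → ℝ) (i : Fin 7) :
    cross x y i = rho x y (Pi.single i 1) := rfl

/-- `|x ⋆ y|² = |x|²·|y|² − ⟨x,y⟩²` for all `x, y` in ℝ⁷. -/
theorem stmt3 (x y : Fin 7 → ℝ) :
    inn (cross x y) (cross x y) = inn x x * inn y y - inn x y ^ 2 := by
  have h0 : cross x y 0 = (x 1 * y 2 - x 2 * y 1) + (x 3 * y 4 - x 4 * y 3)
      + (x 5 * y 6 - x 6 * y 5) := by
    rw [cross_coord]
    simp only [rho, tripleForm, Pi.single_apply, Fin.isValue]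
    norm_num [Fin.ext_iff, show ((0:Fin 7):ℕ)=0 from rfl,
      show ((1:Fin 7):ℕ)=1 from rfl, show ((2:Fin 7):ℕ)=2 from rfl,
      show ((3:Fin 7):ℕ)=3 from rfl, show ((4:Fin 7):ℕ)=4 from rfl,
      show ((5:Fin 7):ℕ)=5 from rfl, show ((6:Fin 7):ℕ)=6 from rfl]
    try ring
  have h1 : cross x y 1 = -(x 0 * y 2 - x 2 * y 0) + (x 3 * y 5 - x 5 * y 3)
      - (x 4 * y 6 - x 6 * y 4) := by
    rw [cross_coord]
    simp only [rho, tripleForm, Pi.single_apply, Fin.isValue]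
    norm_num [Fin.ext_iff, show ((0:Fin 7):ℕ)=0 from rfl,
      show ((1:Fin 7):ℕ)=1 from rfl, show ((2:Fin 7):ℕ)=2 from rfl,
      show ((3:Fin 7):ℕ)=3 from rfl, show ((4:Fin 7):ℕ)=4 from rfl,
      show ((5:Fin 7):ℕ)=5 from rfl, show ((6:Fin 7):ℕ)=6 from rfl]
    try ring
  have h2 : cross x y 2 = (x 0 * y 1 - x 1 * y 0) - (x 3 * y 6 - x 6 * y 3)
      - (x 4 * y 5 - x 5 * y 4) := by
    rw [cross_coord]
    simp only [rho, tripleForm, Pi.single_apply, Fin.isValue]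
    norm_num [Fin.ext_iff, show ((0:Fin 7):ℕ)=0 from rfl,
      show ((1:Fin 7):ℕ)=1 from rfl, show ((2:Fin 7):ℕ)=2 from rfl,
      show ((3:Fin 7):ℕ)=3 from rfl, show ((4:Fin 7):ℕ)=4 from rfl,
      show ((5:Fin 7):ℕ)=5 from rfl, show ((6:Fin 7):ℕ)=6 from rfl]
    try ring
  have h3 : cross x y 3 = -(x 0 * y 4 - x 4 * y 0) - (x 1 * y 5 - x 5 * y 1)
      + (x 2 * y 6 - x 6 * y 2) := by
    rw [cross_coord]
    simp only [rho, tripleForm, Pi.single_apply, Fin.isValue]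
    norm_num [Fin.ext_iff, show ((0:Fin 7):ℕ)=0 from rfl,
      show ((1:Fin 7):ℕ)=1 from rfl, show ((2:Fin 7):ℕ)=2 from rfl,
      show ((3:Fin 7):ℕ)=3 from rfl, show ((4:Fin 7):ℕ)=4 from rfl,
      show ((5:Fin 7):ℕ)=5 from rfl, show ((6:Fin 7):ℕ)=6 from rfl]
    try ring
  have h4 : cross x y 4 = (x 0 * y 3 - x 3 * y 0) + (x 1 * y 6 - x 6 * y 1)
      + (x 2 * y 5 - x 5 * y 2) := by
    rw [cross_coord]
    simp only [rho, tripleForm, Pi.single_apply, Fin.isValue]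
    norm_num [Fin.ext_iff, show ((0:Fin 7):ℕ)=0 from rfl,
      show ((1:Fin 7):ℕ)=1 from rfl, show ((2:Fin 7):ℕ)=2 from rfl,
      show ((3:Fin 7):ℕ)=3 from rfl, show ((4:Fin 7):ℕ)=4 from rfl,
      show ((5:Fin 7):ℕ)=5 from rfl, show ((6:Fin 7):ℕ)=6 from rfl]
    try ring
  have h5 : cross x y 5 = -(x 0 * y 6 - x 6 * y 0) + (x 1 * y 3 - x 3 * y 1)
      - (x 2 * y 4 - x 4 * y 2) := by
    rw [cross_coord]
    simp only [rho, tripleForm, Pi.single_apply, Fin.isValue]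
    norm_num [Fin.ext_iff, show ((0:Fin 7):ℕ)=0 from rfl,
      show ((1:Fin 7):ℕ)=1 from rfl, show ((2:Fin 7):ℕ)=2 from rfl,
      show ((3:Fin 7):ℕ)=3 from rfl, show ((4:Fin 7):ℕ)=4 from rfl,
      show ((5:Fin 7):ℕ)=5 from rfl, show ((6:Fin 7):ℕ)=6 from rfl]
    try ring
  have h6 : cross x y 6 = (x 0 * y 5 - x 5 * y 0) - (x 1 * y 4 - x 4 * y 1)
      - (x 2 * y 3 - x 3 * y 2) := by
    rw [cross_coord]
    simp only [rho, tripleForm, Pi.single_apply, Fin.isValue]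
    norm_num [Fin.ext_iff, show ((0:Fin 7):ℕ)=0 from rfl,
      show ((1:Fin 7):ℕ)=1 from rfl, show ((2:Fin 7):ℕ)=2 from rfl,
      show ((3:Fin 7):ℕ)=3 from rfl, show ((4:Fin 7):ℕ)=4 from rfl,
      show ((5:Fin 7):ℕ)=5 from rfl, show ((6:Fin 7):ℕ)=6 from rfl]
    try ring
  rw [inn_expand, inn_expand x x, inn_expand y y, inn_expand x y,
    h0, h1, h2, h3, h4, h5, h6]
  ring
end
end

section
/- Let v ∈ ℝ⁷ be a unit vector and J_v the map x ↦ v ⋆ x, where ⋆ is the cross product defined from the standard G₂ 3-form ρ₀. Then for all x, y in the orthogonal complement v^⊥ one has ρ₀(v, x, J_v y) = ⟨x, y⟩, and consequently ρ₀(v, J_v x, J_v y) = ρ₀(v, x, y). In other words, the 2-form ι_vρ₀ restricted to v^⊥ is the Hermitian (Kähler) form of the complex structure J_v and the Euclidean metric, and it is of type (1,1) with respect to J_v. -/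
noncomputable section

lemma inn_cross' (a b c : Fin 7 → ℝ) : inn (cross a b) c = rho a b c := by
  simp [inn, cross, rho, tripleForm, Fin.sum_univ_seven, Pi.single_apply]
  ring

set_option maxHeartbeats 1000000 in
lemma inn_cross_cross' (a b c : Fin 7 → ℝ) :
    inn (cross a b) (cross a c) = inn a a * inn b c - inn a b * inn a c := by
  simp [inn, cross, rho, tripleForm, Fin.sum_univ_seven, Pi.single_apply]
  ring

set_option maxHeartbeats 1000000 in
lemma cross_cross' (a b : Fin 7 → ℝ) :
    cross a (cross a b) = fun i => inn a b * a i - inn a a * b i := by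
  funext i
  fin_cases i <;>
  · simp [inn, cross, rho, tripleForm, Fin.sum_univ_seven, Pi.single_apply]
    ring

lemma inn_comm' (a b : Fin 7 → ℝ) : inn a b = inn b a := by
  simp only [inn, Fin.sum_univ_seven]; ring

lemma inn_smul_sub' (s t : ℝ) (a b c : Fin 7 → ℝ) :
    inn (fun i => s * a i - t * b i) c = s * inn a c - t * inn b c := by
  simp only [inn, Fin.sum_univ_seven]; ring

lemma rho_swap' (a b c : Fin 7 → ℝ) : rho a b c = -rho a c b := by
  simp only [rho, tripleForm]; ring

lemma rho_self' (a b : Fin 7 → ℝ) : rho a b a = 0 := by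
  simp only [rho, tripleForm]; ring

/-- for a unit vector `v` and `x, y` in `v^⊥` one has
`rho (v, x, J_v y) = ⟨x, y⟩`, and consequently `rho (v, J_v x, J_v y) = rho (v, x, y)`:
the 2-form `i_v rho` restricted to `v^⊥` is the Hermitian form of `J_v`, of type (1,1). -/
theorem stmt5 (v : Fin 7 → ℝ) (hv : inn v v = 1)
    (x y : Fin 7 → ℝ) (hx : inn v x = 0) (hy : inn v y = 0) :
    rho v x (cross v y) = inn x y ∧
    rho v (cross v x) (cross v y) = rho v x y := by
  constructor
  · rw [← inn_cross', inn_cross_cross', hv, hx, one_mul, zero_mul, sub_zero]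
  · rw [← inn_cross' v (cross v x) (cross v y), cross_cross', inn_smul_sub', hv, one_mul,
      inn_comm' v (cross v y), inn_cross', rho_self', mul_zero, zero_sub,
      inn_comm' x (cross v y), inn_cross', rho_swap' v y x, neg_neg]
end
end

section
/- Let v, v₁ ∈ ℝ⁷ be orthonormal vectors (|v| = |v₁| = 1, ⟨v, v₁⟩ = 0), and let J_{v₁} be the map x ↦ v₁ ⋆ x given by the cross product of the standard G₂ 3-form ρ₀. Then for all x, y in the orthogonal complement v₁^⊥ one has ρ₀(v, J_{v₁}x, J_{v₁}y) = −ρ₀(v, x, y). Equivalently, the restriction of the Hermitian form ω_W = ι_vρ₀ of v^⊥ to the hyperplane W₁ = v₁^⊥ is of Hodge type (2,0)+(0,2) with respect to the complex structure J_{v₁} of W₁. -/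
noncomputable section

/-! For arbitrary `v, u`, the form `(x, y) ↦ ρ₀(v, u ⋆ x, u ⋆ y)` equals `−|u|² ρ₀(v, x, y)` up to
terms carrying a factor `⟨u, x⟩`, `⟨u, y⟩` or `⟨v, u⟩` (a polynomial identity in the coordinates).
For `|u| = 1`, `v ⊥ u` and `x, y ∈ u^⊥` all of these vanish. -/

theorem rho_cross_cross (v u x y : Fin 7 → ℝ) :
    rho v (cross u x) (cross u y) =
      inn u x * rho v u y - inn u y * rho v u x + 2 * inn v u * rho u x y
        - inn u u * rho v x y := by
  simp only [cross, rho, tripleForm, inn, Fin.sum_univ_seven, Pi.single_apply, Fin.reduceEq,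
    reduceIte, Fin.isValue]
  ring

theorem stmt6_general (v v₁ : Fin 7 → ℝ) (hv₁ : inn v₁ v₁ = 1)
    (hvv₁ : inn v v₁ = 0)
    (x y : Fin 7 → ℝ) (hx : inn v₁ x = 0) (hy : inn v₁ y = 0) :
    rho v (cross v₁ x) (cross v₁ y) = -(rho v x y) := by
  rw [rho_cross_cross, hx, hy, hvv₁, hv₁]
  ring

/-- for orthonormal `v, v₁` and all `x, y` in `v₁^⊥`,
`rho (v, J_{v₁} x, J_{v₁} y) = − rho (v, x, y)`: the restriction of the Hermitian form
`ω_W = i_v rho` of `v^⊥` to `W₁ = v₁^⊥` is of Hodge type (2,0)+(0,2) w.r.t. `J_{v₁}`. -/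
theorem stmt6 (v v₁ : Fin 7 → ℝ) (hv : inn v v = 1) (hv₁ : inn v₁ v₁ = 1)
    (hvv₁ : inn v v₁ = 0)
    (x y : Fin 7 → ℝ) (hx : inn v₁ x = 0) (hy : inn v₁ y = 0) :
    rho v (cross v₁ x) (cross v₁ y) = -(rho v x y) :=
  stmt6_general v v₁ hv₁ hvv₁ x y hx hy
end
end

section
/- Let v ∈ ℝ⁷ be a unit vector and J_v the map x ↦ v ⋆ x given by the cross product of the standard G₂ 3-form ρ₀. Then for all x, y, z in the orthogonal complement v^⊥ one has ρ₀(J_v x, J_v y, z) = −ρ₀(x, y, z). Equivalently, the restriction of ρ₀ to v^⊥ is of Hodge type (3,0)+(0,3) with respect to J_v, i.e. it is the real part of a holomorphic volume form on (v^⊥, J_v). -/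
noncomputable section

lemma rho_expand (a b z : Fin 7 → ℝ) :
    rho a b z = z 0 * cross a b 0 + z 1 * cross a b 1 + z 2 * cross a b 2
      + z 3 * cross a b 3 + z 4 * cross a b 4 + z 5 * cross a b 5 + z 6 * cross a b 6 := by
  simp [rho, cross, tripleForm, Pi.single_apply]
  ring

set_option maxHeartbeats 2000000 in
/-- for a unit vector `v` and all `x, y, z` in `v^⊥`,
`rho (J_v x, J_v y, z) = − rho (x, y, z)`: the restriction of `rho` to `v^⊥` is of Hodge
type (3,0)+(0,3) with respect to the complex structure `J_v`. -/
theorem stmt7 (v : Fin 7 → ℝ) (hv : inn v v = 1)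
    (x y z : Fin 7 → ℝ) (hx : inn v x = 0) (hy : inn v y = 0) (hz : inn v z = 0) :
    rho (cross v x) (cross v y) z = -(rho x y z) := by
  simp only [inn, Fin.sum_univ_seven] at hv hx hy hz
  have h0 : cross (cross v x) (cross v y) 0 = -(cross x y 0) + v 0 * (-2 * v 6 * x 5 * y 0 + 2 * v 6 * x 4 * y 1 + 2 * v 6 * x 3 * y 2 - 2 * v 6 * x 2 * y 3 - 2 * v 6 * x 1 * y 4 + 2 * v 6 * x 0 * y 5 + 2 * v 5 * x 6 * y 0 + 2 * v 5 * x 4 * y 2 - 2 * v 5 * x 3 * y 1 - 2 * v 5 * x 2 * y 4 + 2 * v 5 * x 1 * y 3 - 2 * v 5 * x 0 * y 6 - 2 * v 4 * x 6 * y 1 - 2 * v 4 * x 5 * y 2 - 2 * v 4 * x 3 * y 0 + 2 * v 4 * x 2 * y 5 + 2 * v 4 * x 1 * y 6 + 2 * v 4 * x 0 * y 3 - 2 * v 3 * x 6 * y 2 + 2 * v 3 * x 5 * y 1 + 2 * v 3 * x 4 * y 0 + 2 * v 3 * x 2 * y 6 - 2 * v 3 * x 1 * y 5 - 2 * v 3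 * x 0 * y 4 + 2 * v 2 * x 6 * y 3 + 2 * v 2 * x 5 * y 4 - 2 * v 2 * x 4 * y 5 - 2 * v 2 * x 3 * y 6 - 2 * v 2 * x 1 * y 0 + 2 * v 2 * x 0 * y 1 + 2 * v 1 * x 6 * y 4 - 2 * v 1 * x 5 * y 3 - 2 * v 1 * x 4 * y 6 + 2 * v 1 * x 3 * y 5 + 2 * v 1 * x 2 * y 0 - 2 * v 1 * x 0 * y 2 - 2 * v 0 * x 6 * y 5 + 2 * v 0 * x 5 * y 6 - 2 * v 0 * x 4 * y 3 + 2 * v 0 * x 3 * y 4 - 2 * v 0 * x 2 * y 1 + 2 * v 0 * x 1 * y 2) := by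
    simp [cross, rho, tripleForm, Pi.single_apply]
    linear_combination (-(-x 6 * y 5 + x 5 * y 6 - x 4 * y 3 + x 3 * y 4 - x 2 * y 1 + x 1 * y 2)) * hv + (-v 6 * y 5 + v 5 * y 6 - v 4 * y 3 + v 3 * y 4 - v 2 * y 1 + v 1 * y 2) * hx + (v 6 * x 5 - v 5 * x 6 + v 4 * x 3 - v 3 * x 4 + v 2 * x 1 - v 1 * x 2) * hy
  have h1 : cross (cross v x) (cross v y) 1 = -(cross x y 1) + v 1 * (-2 * v 6 * x 5 * y 0 + 2 * v 6 * x 4 * y 1 + 2 * v 6 * x 3 * y 2 - 2 * v 6 * x 2 * y 3 - 2 * v 6 * x 1 * y 4 + 2 * v 6 * x 0 * y 5 + 2 * v 5 * x 6 * y 0 + 2 * v 5 * x 4 * y 2 - 2 * v 5 * x 3 * y 1 - 2 * v 5 * x 2 * y 4 + 2 * v 5 * x 1 * y 3 - 2 * v 5 * x 0 * y 6 - 2 * v 4 * x 6 * y 1 - 2 * v 4 * x 5 * y 2 - 2 * v 4 * x 3 * y 0 + 2 * v 4 * x 2 * y 5 + 2 * v 4 * x 1 * y 6 + 2 * v 4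 * x 0 * y 3 - 2 * v 3 * x 6 * y 2 + 2 * v 3 * x 5 * y 1 + 2 * v 3 * x 4 * y 0 + 2 * v 3 * x 2 * y 6 - 2 * v 3 * x 1 * y 5 - 2 * v 3 * x 0 * y 4 + 2 * v 2 * x 6 * y 3 + 2 * v 2 * x 5 * y 4 - 2 * v 2 * x 4 * y 5 - 2 * v 2 * x 3 * y 6 - 2 * v 2 * x 1 * y 0 + 2 * v 2 * x 0 * y 1 + 2 * v 1 * x 6 * y 4 - 2 * v 1 * x 5 * y 3 - 2 * v 1 * x 4 * y 6 + 2 * v 1 * x 3 * y 5 + 2 * v 1 * x 2 * y 0 - 2 * v 1 * x 0 * y 2 - 2 * v 0 * x 6 * y 5 + 2 * v 0 * x 5 * y 6 - 2 * v 0 * x 4 * y 3 + 2 * v 0 * x 3 * y 4 - 2 * v 0 * x 2 * y 1 + 2 * v 0 * x 1 * y 2) := by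
    simp [cross, rho, tripleForm, Pi.single_apply]
    linear_combination (-(x 6 * y 4 - x 5 * y 3 - x 4 * y 6 + x 3 * y 5 + x 2 * y 0 - x 0 * y 2)) * hv + (v 6 * y 4 - v 5 * y 3 - v 4 * y 6 + v 3 * y 5 + v 2 * y 0 - v 0 * y 2) * hx + (-v 6 * x 4 + v 5 * x 3 + v 4 * x 6 - v 3 * x 5 - v 2 * x 0 + v 0 * x 2) * hy
  have h2 : cross (cross v x) (cross v y) 2 = -(cross x y 2) + v 2 * (-2 * v 6 * x 5 * y 0 + 2 * v 6 * x 4 * y 1 + 2 * v 6 * x 3 * y 2 - 2 * v 6 * x 2 * y 3 - 2 * v 6 * x 1 * y 4 + 2 * v 6 * x 0 * y 5 + 2 * v 5 * x 6 * y 0 + 2 * v 5 * x 4 * y 2 - 2 * v 5 * x 3 * y 1 - 2 * v 5 * x 2 * y 4 + 2 * v 5 * x 1 * y 3 - 2 * v 5 * x 0 * y 6 - 2 * v 4 * x 6 * y 1 - 2 * v 4 * x 5 * y 2 - 2 * v 4 * x 3 * y 0 + 2 * v 4 * x 2 * y 5 + 2 * v 4 * x 1 * y 6 + 2 * v 4 *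 x 0 * y 3 - 2 * v 3 * x 6 * y 2 + 2 * v 3 * x 5 * y 1 + 2 * v 3 * x 4 * y 0 + 2 * v 3 * x 2 * y 6 - 2 * v 3 * x 1 * y 5 - 2 * v 3 * x 0 * y 4 + 2 * v 2 * x 6 * y 3 + 2 * v 2 * x 5 * y 4 - 2 * v 2 * x 4 * y 5 - 2 * v 2 * x 3 * y 6 - 2 * v 2 * x 1 * y 0 + 2 * v 2 * x 0 * y 1 + 2 * v 1 * x 6 * y 4 - 2 * v 1 * x 5 * y 3 - 2 * v 1 * x 4 * y 6 + 2 * v 1 * x 3 * y 5 + 2 * v 1 * x 2 * y 0 - 2 * v 1 * x 0 * y 2 - 2 * v 0 * x 6 * y 5 + 2 * v 0 * x 5 * y 6 - 2 * v 0 * x 4 * y 3 + 2 * v 0 * x 3 * y 4 - 2 * v 0 * x 2 * y 1 + 2 * v 0 * x 1 * y 2) := by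
    simp [cross, rho, tripleForm, Pi.single_apply]
    linear_combination (-(x 6 * y 3 + x 5 * y 4 - x 4 * y 5 - x 3 * y 6 - x 1 * y 0 + x 0 * y 1)) * hv + (v 6 * y 3 + v 5 * y 4 - v 4 * y 5 - v 3 * y 6 - v 1 * y 0 + v 0 * y 1) * hx + (-v 6 * x 3 - v 5 * x 4 + v 4 * x 5 + v 3 * x 6 + v 1 * x 0 - v 0 * x 1) * hy
  have h3 : cross (cross v x) (cross v y) 3 = -(cross x y 3) + v 3 * (-2 * v 6 * x 5 * y 0 + 2 * v 6 * x 4 * y 1 + 2 * v 6 * x 3 * y 2 - 2 * v 6 * x 2 * y 3 - 2 * v 6 * x 1 * y 4 + 2 * v 6 * x 0 * y 5 + 2 * v 5 * x 6 * y 0 + 2 * v 5 * x 4 * y 2 - 2 * v 5 * x 3 * y 1 - 2 * v 5 * x 2 * y 4 + 2 * v 5 * x 1 * y 3 - 2 * v 5 * x 0 * y 6 - 2 * v 4 * x 6 * y 1 - 2 * v 4 * x 5 * y 2 - 2 * v 4 * x 3 * y 0 + 2 * v 4 * x 2 * y 5 + 2 * v 4 * x 1 * y 6 + 2 * v 4 *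 x 0 * y 3 - 2 * v 3 * x 6 * y 2 + 2 * v 3 * x 5 * y 1 + 2 * v 3 * x 4 * y 0 + 2 * v 3 * x 2 * y 6 - 2 * v 3 * x 1 * y 5 - 2 * v 3 * x 0 * y 4 + 2 * v 2 * x 6 * y 3 + 2 * v 2 * x 5 * y 4 - 2 * v 2 * x 4 * y 5 - 2 * v 2 * x 3 * y 6 - 2 * v 2 * x 1 * y 0 + 2 * v 2 * x 0 * y 1 + 2 * v 1 * x 6 * y 4 - 2 * v 1 * x 5 * y 3 - 2 * v 1 * x 4 * y 6 + 2 * v 1 * x 3 * y 5 + 2 * v 1 * x 2 * y 0 - 2 * v 1 * x 0 * y 2 - 2 * v 0 * x 6 * y 5 + 2 * v 0 * x 5 * y 6 - 2 * v 0 * x 4 * y 3 + 2 * v 0 * x 3 * y 4 - 2 * v 0 * x 2 * y 1 + 2 * v 0 * x 1 * y 2) := by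
    simp [cross, rho, tripleForm, Pi.single_apply]
    linear_combination (-(-x 6 * y 2 + x 5 * y 1 + x 4 * y 0 + x 2 * y 6 - x 1 * y 5 - x 0 * y 4)) * hv + (-v 6 * y 2 + v 5 * y 1 + v 4 * y 0 + v 2 * y 6 - v 1 * y 5 - v 0 * y 4) * hx + (v 6 * x 2 - v 5 * x 1 - v 4 * x 0 - v 2 * x 6 + v 1 * x 5 + v 0 * x 4) * hy
  have h4 : cross (cross v x) (cross v y) 4 = -(cross x y 4) + v 4 * (-2 * v 6 * x 5 * y 0 + 2 * v 6 * x 4 * y 1 + 2 * v 6 * x 3 * y 2 - 2 * v 6 * x 2 * y 3 - 2 * v 6 * x 1 * y 4 + 2 * v 6 * x 0 * y 5 + 2 * v 5 * x 6 * y 0 + 2 * v 5 * x 4 * y 2 - 2 * v 5 * x 3 * y 1 - 2 * v 5 * x 2 * y 4 + 2 * v 5 * x 1 * y 3 - 2 * v 5 * x 0 * y 6 - 2 * v 4 * x 6 * y 1 - 2 * v 4 * x 5 * y 2 - 2 * v 4 * x 3 * y 0 + 2 * v 4 * x 2 * y 5 + 2 * v 4 * x 1 * y 6 + 2 * v 4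 * x 0 * y 3 - 2 * v 3 * x 6 * y 2 + 2 * v 3 * x 5 * y 1 + 2 * v 3 * x 4 * y 0 + 2 * v 3 * x 2 * y 6 - 2 * v 3 * x 1 * y 5 - 2 * v 3 * x 0 * y 4 + 2 * v 2 * x 6 * y 3 + 2 * v 2 * x 5 * y 4 - 2 * v 2 * x 4 * y 5 - 2 * v 2 * x 3 * y 6 - 2 * v 2 * x 1 * y 0 + 2 * v 2 * x 0 * y 1 + 2 * v 1 * x 6 * y 4 - 2 * v 1 * x 5 * y 3 - 2 * v 1 * x 4 * y 6 + 2 * v 1 * x 3 * y 5 + 2 * v 1 * x 2 * y 0 - 2 * v 1 * x 0 * y 2 - 2 * v 0 * x 6 * y 5 + 2 * v 0 * x 5 * y 6 - 2 * v 0 * x 4 * y 3 + 2 * v 0 * x 3 * y 4 - 2 * v 0 * x 2 * y 1 + 2 * v 0 * x 1 * y 2) := by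
    simp [cross, rho, tripleForm, Pi.single_apply]
    linear_combination (-(-x 6 * y 1 - x 5 * y 2 - x 3 * y 0 + x 2 * y 5 + x 1 * y 6 + x 0 * y 3)) * hv + (-v 6 * y 1 - v 5 * y 2 - v 3 * y 0 + v 2 * y 5 + v 1 * y 6 + v 0 * y 3) * hx + (v 6 * x 1 + v 5 * x 2 + v 3 * x 0 - v 2 * x 5 - v 1 * x 6 - v 0 * x 3) * hy
  have h5 : cross (cross v x) (cross v y) 5 = -(cross x y 5) + v 5 * (-2 * v 6 * x 5 * y 0 + 2 * v 6 * x 4 * y 1 + 2 * v 6 * x 3 * y 2 - 2 * v 6 * x 2 * y 3 - 2 * v 6 * x 1 * y 4 + 2 * v 6 * x 0 * y 5 + 2 * v 5 * x 6 * y 0 + 2 * v 5 * x 4 * y 2 - 2 * v 5 * x 3 * y 1 - 2 * v 5 * x 2 * y 4 + 2 * v 5 * x 1 * y 3 - 2 * v 5 * x 0 * y 6 - 2 * v 4 * x 6 * y 1 - 2 * v 4 * x 5 * y 2 - 2 * v 4 * x 3 * y 0 + 2 * v 4 * x 2 * y 5 + 2 * v 4 * x 1 * y 6 + 2 * v 4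 * x 0 * y 3 - 2 * v 3 * x 6 * y 2 + 2 * v 3 * x 5 * y 1 + 2 * v 3 * x 4 * y 0 + 2 * v 3 * x 2 * y 6 - 2 * v 3 * x 1 * y 5 - 2 * v 3 * x 0 * y 4 + 2 * v 2 * x 6 * y 3 + 2 * v 2 * x 5 * y 4 - 2 * v 2 * x 4 * y 5 - 2 * v 2 * x 3 * y 6 - 2 * v 2 * x 1 * y 0 + 2 * v 2 * x 0 * y 1 + 2 * v 1 * x 6 * y 4 - 2 * v 1 * x 5 * y 3 - 2 * v 1 * x 4 * y 6 + 2 * v 1 * x 3 * y 5 + 2 * v 1 * x 2 * y 0 - 2 * v 1 * x 0 * y 2 - 2 * v 0 * x 6 * y 5 + 2 * v 0 * x 5 * y 6 - 2 * v 0 * x 4 * y 3 + 2 * v 0 * x 3 * y 4 - 2 * v 0 * x 2 * y 1 + 2 * v 0 * x 1 * y 2) := by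
    simp [cross, rho, tripleForm, Pi.single_apply]
    linear_combination (-(x 6 * y 0 + x 4 * y 2 - x 3 * y 1 - x 2 * y 4 + x 1 * y 3 - x 0 * y 6)) * hv + (v 6 * y 0 + v 4 * y 2 - v 3 * y 1 - v 2 * y 4 + v 1 * y 3 - v 0 * y 6) * hx + (-v 6 * x 0 - v 4 * x 2 + v 3 * x 1 + v 2 * x 4 - v 1 * x 3 + v 0 * x 6) * hy
  have h6 : cross (cross v x) (cross v y) 6 = -(cross x y 6) + v 6 * (-2 * v 6 * x 5 * y 0 + 2 * v 6 * x 4 * y 1 + 2 * v 6 * x 3 * y 2 - 2 * v 6 * x 2 * y 3 - 2 * v 6 * x 1 * y 4 + 2 * v 6 * x 0 * y 5 + 2 * v 5 * x 6 * y 0 + 2 * v 5 * x 4 * y 2 - 2 * v 5 * x 3 * y 1 - 2 * v 5 * x 2 * y 4 + 2 * v 5 * x 1 * y 3 - 2 * v 5 * x 0 * y 6 - 2 * v 4 * x 6 * y 1 - 2 * v 4 * x 5 * y 2 - 2 * v 4 * x 3 * y 0 + 2 * v 4 * x 2 * y 5 + 2 * v 4 * x 1 * y 6 + 2 * v 4 *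 x 0 * y 3 - 2 * v 3 * x 6 * y 2 + 2 * v 3 * x 5 * y 1 + 2 * v 3 * x 4 * y 0 + 2 * v 3 * x 2 * y 6 - 2 * v 3 * x 1 * y 5 - 2 * v 3 * x 0 * y 4 + 2 * v 2 * x 6 * y 3 + 2 * v 2 * x 5 * y 4 - 2 * v 2 * x 4 * y 5 - 2 * v 2 * x 3 * y 6 - 2 * v 2 * x 1 * y 0 + 2 * v 2 * x 0 * y 1 + 2 * v 1 * x 6 * y 4 - 2 * v 1 * x 5 * y 3 - 2 * v 1 * x 4 * y 6 + 2 * v 1 * x 3 * y 5 + 2 * v 1 * x 2 * y 0 - 2 * v 1 * x 0 * y 2 - 2 * v 0 * x 6 * y 5 + 2 * v 0 * x 5 * y 6 - 2 * v 0 * x 4 * y 3 + 2 * v 0 * x 3 * y 4 - 2 * v 0 * x 2 * y 1 + 2 * v 0 * x 1 * y 2) := by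
    simp [cross, rho, tripleForm, Pi.single_apply]
    linear_combination (-(-x 5 * y 0 + x 4 * y 1 + x 3 * y 2 - x 2 * y 3 - x 1 * y 4 + x 0 * y 5)) * hv + (-v 5 * y 0 + v 4 * y 1 + v 3 * y 2 - v 2 * y 3 - v 1 * y 4 + v 0 * y 5) * hx + (v 5 * x 0 - v 4 * x 1 - v 3 * x 2 + v 2 * x 3 + v 1 * x 4 - v 0 * x 5) * hy
  rw [rho_expand (cross v x) (cross v y) z, rho_expand x y z, h0, h1, h2, h3, h4, h5, h6]
  linear_combination (-2 * v 6 * x 5 * y 0 + 2 * v 6 * x 4 * y 1 + 2 * v 6 * x 3 * y 2 - 2 * v 6 * x 2 * y 3 - 2 * v 6 * x 1 * y 4 + 2 * v 6 * x 0 * y 5 + 2 * v 5 * x 6 * y 0 + 2 * v 5 * x 4 * y 2 - 2 * v 5 * x 3 * y 1 - 2 * v 5 * x 2 * y 4 + 2 * v 5 * x 1 * y 3 - 2 * v 5 * x 0 * y 6 - 2 * v 4 * x 6 * y 1 - 2 * v 4 * x 5 * y 2 - 2 * v 4 * x 3 * y 0 + 2 * v 4 * x 2 * y 5 + 2 * v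 4 * x 1 * y 6 + 2 * v 4 * x 0 * y 3 - 2 * v 3 * x 6 * y 2 + 2 * v 3 * x 5 * y 1 + 2 * v 3 * x 4 * y 0 + 2 * v 3 * x 2 * y 6 - 2 * v 3 * x 1 * y 5 - 2 * v 3 * x 0 * y 4 + 2 * v 2 * x 6 * y 3 + 2 * v 2 * x 5 * y 4 - 2 * v 2 * x 4 * y 5 - 2 * v 2 * x 3 * y 6 - 2 * v 2 * x 1 * y 0 + 2 * v 2 * x 0 * y 1 + 2 * v 1 * x 6 * y 4 - 2 * v 1 * x 5 * y 3 - 2 * v 1 * x 4 * y 6 + 2 * v 1 * x 3 * y 5 + 2 * v 1 * x 2 * y 0 - 2 * v 1 * x 0 * y 2 - 2 * v 0 * x 6 * y 5 + 2 * v 0 * x 5 * y 6 - 2 * v 0 * x 4 * y 3 + 2 * v 0 * x 3 * y 4 - 2 * v 0 * x 2 * y 1 + 2 * v 0 * x 1 * y 2) * hz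
end
end

section
/- Every linear endomorphism A of ℝ⁷ that annihilates the standard G₂ 3-form ρ₀ (i.e. ρ₀(Ax,y,z) + ρ₀(x,Ay,z) + ρ₀(x,y,Az) = 0 for all x,y,z) is skew-adjoint with respect to the standard inner product: ⟨Ax, y⟩ = −⟨x, Ay⟩ for all x, y ∈ ℝ⁷. In other words, the stabilizer Lie algebra 𝔤₂ of ρ₀ is contained in 𝔰𝔬(7). -/
noncomputable section

set_option maxHeartbeats 1600000 in
set_option maxRecDepth 8000 in
/-- every linear endomorphism of ℝ⁷ annihilating `rho` is skew-adjoint with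
respect to the standard inner product: the stabilizer Lie algebra `g₂` of `rho` is
contained in `so(7)`. -/
theorem stmt9 (A : (Fin 7 → ℝ) →ₗ[ℝ] (Fin 7 → ℝ))
    (hA : ∀ x y z : Fin 7 → ℝ,
      rho (A x) y z + rho x (A y) z + rho x y (A z) = 0) :
    ∀ x y : Fin 7 → ℝ, inn (A x) y = -(inn x (A y)) := by
  intro x y
  have hv : ∀ v : Fin 7 → ℝ, A v = ∑ i : Fin 7, v i • A (Pi.single i 1) := by
    intro v
    have hv0 : v = ∑ i : Fin 7, v i • (Pi.single i 1 : Fin 7 → ℝ) := by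
      funext k
      simp [Pi.single_apply, Finset.sum_apply]
    conv_lhs => rw [hv0]
    rw [map_sum]
    simp
  have h012 := hA (Pi.single 0 1) (Pi.single 1 1) (Pi.single 2 1)
  have h013 := hA (Pi.single 0 1) (Pi.single 1 1) (Pi.single 3 1)
  have h014 := hA (Pi.single 0 1) (Pi.single 1 1) (Pi.single 4 1)
  have h015 := hA (Pi.single 0 1) (Pi.single 1 1) (Pi.single 5 1)
  have h016 := hA (Pi.single 0 1) (Pi.single 1 1) (Pi.single 6 1)
  have h023 := hA (Pi.single 0 1) (Pi.single 2 1) (Pi.single 3 1)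
  have h024 := hA (Pi.single 0 1) (Pi.single 2 1) (Pi.single 4 1)
  have h025 := hA (Pi.single 0 1) (Pi.single 2 1) (Pi.single 5 1)
  have h026 := hA (Pi.single 0 1) (Pi.single 2 1) (Pi.single 6 1)
  have h034 := hA (Pi.single 0 1) (Pi.single 3 1) (Pi.single 4 1)
  have h035 := hA (Pi.single 0 1) (Pi.single 3 1) (Pi.single 5 1)
  have h036 := hA (Pi.single 0 1) (Pi.single 3 1) (Pi.single 6 1)
  have h045 := hA (Pi.single 0 1) (Pi.single 4 1) (Pi.single 5 1)
  have h046 := hA (Pi.single 0 1) (Pi.single 4 1) (Pi.single 6 1)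
  have h056 := hA (Pi.single 0 1) (Pi.single 5 1) (Pi.single 6 1)
  have h123 := hA (Pi.single 1 1) (Pi.single 2 1) (Pi.single 3 1)
  have h124 := hA (Pi.single 1 1) (Pi.single 2 1) (Pi.single 4 1)
  have h125 := hA (Pi.single 1 1) (Pi.single 2 1) (Pi.single 5 1)
  have h126 := hA (Pi.single 1 1) (Pi.single 2 1) (Pi.single 6 1)
  have h134 := hA (Pi.single 1 1) (Pi.single 3 1) (Pi.single 4 1)
  have h135 := hA (Pi.single 1 1) (Pi.single 3 1) (Pi.single 5 1)
  have h136 := hA (Pi.single 1 1) (Pi.single 3 1) (Pi.single 6 1)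
  have h145 := hA (Pi.single 1 1) (Pi.single 4 1) (Pi.single 5 1)
  have h146 := hA (Pi.single 1 1) (Pi.single 4 1) (Pi.single 6 1)
  have h156 := hA (Pi.single 1 1) (Pi.single 5 1) (Pi.single 6 1)
  have h234 := hA (Pi.single 2 1) (Pi.single 3 1) (Pi.single 4 1)
  have h235 := hA (Pi.single 2 1) (Pi.single 3 1) (Pi.single 5 1)
  have h236 := hA (Pi.single 2 1) (Pi.single 3 1) (Pi.single 6 1)
  have h245 := hA (Pi.single 2 1) (Pi.single 4 1) (Pi.single 5 1)
  have h246 := hA (Pi.single 2 1) (Pi.single 4 1) (Pi.single 6 1)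
  have h256 := hA (Pi.single 2 1) (Pi.single 5 1) (Pi.single 6 1)
  have h345 := hA (Pi.single 3 1) (Pi.single 4 1) (Pi.single 5 1)
  have h346 := hA (Pi.single 3 1) (Pi.single 4 1) (Pi.single 6 1)
  have h356 := hA (Pi.single 3 1) (Pi.single 5 1) (Pi.single 6 1)
  have h456 := hA (Pi.single 4 1) (Pi.single 5 1) (Pi.single 6 1)
  simp only [rho, tripleForm, Pi.single_apply, Fin.reduceEq, reduceIte,
    mul_zero, zero_mul, mul_one, one_mul, sub_zero, zero_sub, add_zero, zero_add,
    neg_zero, if_true, if_false, mul_neg, neg_neg] at h012 h013 h014 h015 h016 h023 h024 h025 h026 h034 h035 h036 h045 h046 h056 h123 h124 h125 h126 h134 h135 h136 h145 h146 h156 h234 h235 h236 h245 h246 h256 h345 h346 h356 h456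
  rw [hv x, hv y]
  simp only [inn, Finset.sum_apply, Pi.smul_apply, smul_eq_mul, Fin.sum_univ_seven]
  linear_combination
      (x 0 * y 0) * ((2/3 : ℝ) * h012 + (2/3 : ℝ) * h034 + (2/3 : ℝ) * h056 + (-1/3 : ℝ) * h135 + (1/3 : ℝ) * h146 + (1/3 : ℝ) * h236 + (1/3 : ℝ) * h245) +
      (x 1 * y 0 + x 0 * y 1) * ((1/2 : ℝ) * h035 + (-1/2 : ℝ) * h046 + (1/2 : ℝ) * h134 + (1/2 : ℝ) * h156) +
      (x 2 * y 0 + x 0 * y 2) * ((-1/2 : ℝ) * h036 + (-1/2 : ℝ) * h045 + (1/2 : ℝ) * h234 + (1/2 : ℝ) * h256) +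
      (x 3 * y 0 + x 0 * y 3) * ((-1/2 : ℝ) * h015 + (1/2 : ℝ) * h026 + (1/2 : ℝ) * h123 + (1/2 : ℝ) * h356) +
      (x 4 * y 0 + x 0 * y 4) * ((1/2 : ℝ) * h016 + (1/2 : ℝ) * h025 + (1/2 : ℝ) * h124 + (1/2 : ℝ) * h456) +
      (x 5 * y 0 + x 0 * y 5) * ((1/2 : ℝ) * h013 + (-1/2 : ℝ) * h024 + (1/2 : ℝ) * h125 + (1/2 : ℝ) * h345) +
      (x 6 * y 0 + x 0 * y 6) * ((-1/2 : ℝ) * h014 + (-1/2 : ℝ) * h023 + (1/2 : ℝ) * h126 + (1/2 : ℝ) * h346) +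
      (x 1 * y 1) * ((2/3 : ℝ) * h012 + (-1/3 : ℝ) * h034 + (-1/3 : ℝ) * h056 + (2/3 : ℝ) * h135 + (-2/3 : ℝ) * h146 + (1/3 : ℝ) * h236 + (1/3 : ℝ) * h245) +
      (x 2 * y 1 + x 1 * y 2) * ((-1/2 : ℝ) * h136 + (-1/2 : ℝ) * h145 + (1/2 : ℝ) * h235 + (-1/2 : ℝ) * h246) +
      (x 3 * y 1 + x 1 * y 3) * ((1/2 : ℝ) * h014 + (-1/2 : ℝ) * h023 + (1/2 : ℝ) * h126 + (-1/2 : ℝ) * h346) +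
      (x 4 * y 1 + x 1 * y 4) * ((-1/2 : ℝ) * h013 + (-1/2 : ℝ) * h024 + (1/2 : ℝ) * h125 + (-1/2 : ℝ) * h345) +
      (x 5 * y 1 + x 1 * y 5) * ((1/2 : ℝ) * h016 + (-1/2 : ℝ) * h025 + (-1/2 : ℝ) * h124 + (1/2 : ℝ) * h456) +
      (x 6 * y 1 + x 1 * y 6) * ((-1/2 : ℝ) * h015 + (-1/2 : ℝ) * h026 + (-1/2 : ℝ) * h123 + (1/2 : ℝ) * h356) +
      (x 2 * y 2) * ((2/3 : ℝ) * h012 + (-1/3 : ℝ) * h034 + (-1/3 : ℝ) * h056 + (-1/3 : ℝ) * h135 + (1/3 : ℝ) * h146 + (-2/3 : ℝ) * h236 + (-2/3 : ℝ) * h245) +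
      (x 3 * y 2 + x 2 * y 3) * ((1/2 : ℝ) * h013 + (1/2 : ℝ) * h024 + (1/2 : ℝ) * h125 + (-1/2 : ℝ) * h345) +
      (x 4 * y 2 + x 2 * y 4) * ((1/2 : ℝ) * h014 + (-1/2 : ℝ) * h023 + (-1/2 : ℝ) * h126 + (1/2 : ℝ) * h346) +
      (x 5 * y 2 + x 2 * y 5) * ((1/2 : ℝ) * h015 + (1/2 : ℝ) * h026 + (-1/2 : ℝ) * h123 + (1/2 : ℝ) * h356) +
      (x 6 * y 2 + x 2 * y 6) * ((1/2 : ℝ) * h016 + (-1/2 : ℝ) * h025 + (1/2 : ℝ) * h124 + (-1/2 : ℝ) * h456) +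
      (x 3 * y 3) * ((-1/3 : ℝ) * h012 + (2/3 : ℝ) * h034 + (-1/3 : ℝ) * h056 + (2/3 : ℝ) * h135 + (1/3 : ℝ) * h146 + (-2/3 : ℝ) * h236 + (1/3 : ℝ) * h245) +
      (x 4 * y 3 + x 3 * y 4) * ((-1/2 : ℝ) * h136 + (1/2 : ℝ) * h145 + (-1/2 : ℝ) * h235 + (-1/2 : ℝ) * h246) +
      (x 5 * y 3 + x 3 * y 5) * ((1/2 : ℝ) * h036 + (-1/2 : ℝ) * h045 + (1/2 : ℝ) * h234 + (-1/2 : ℝ) * h256) +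
      (x 6 * y 3 + x 3 * y 6) * ((-1/2 : ℝ) * h035 + (-1/2 : ℝ) * h046 + (1/2 : ℝ) * h134 + (-1/2 : ℝ) * h156) +
      (x 4 * y 4) * ((-1/3 : ℝ) * h012 + (2/3 : ℝ) * h034 + (-1/3 : ℝ) * h056 + (-1/3 : ℝ) * h135 + (-2/3 : ℝ) * h146 + (1/3 : ℝ) * h236 + (-2/3 : ℝ) * h245) +
      (x 5 * y 4 + x 4 * y 5) * ((1/2 : ℝ) * h035 + (1/2 : ℝ) * h046 + (1/2 : ℝ) * h134 + (-1/2 : ℝ) * h156) +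
      (x 6 * y 4 + x 4 * y 6) * ((1/2 : ℝ) * h036 + (-1/2 : ℝ) * h045 + (-1/2 : ℝ) * h234 + (1/2 : ℝ) * h256) +
      (x 5 * y 5) * ((-1/3 : ℝ) * h012 + (-1/3 : ℝ) * h034 + (2/3 : ℝ) * h056 + (2/3 : ℝ) * h135 + (1/3 : ℝ) * h146 + (1/3 : ℝ) * h236 + (-2/3 : ℝ) * h245) +
      (x 6 * y 5 + x 5 * y 6) * ((1/2 : ℝ) * h136 + (-1/2 : ℝ) * h145 + (-1/2 : ℝ) * h235 + (-1/2 : ℝ) * h246) +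
      (x 6 * y 6) * ((-1/3 : ℝ) * h012 + (-1/3 : ℝ) * h034 + (2/3 : ℝ) * h056 + (-1/3 : ℝ) * h135 + (-2/3 : ℝ) * h146 + (-2/3 : ℝ) * h236 + (1/3 : ℝ) * h245)
end
end

section
/- The 21-dimensional space of alternating 2-forms on ℝ⁷ is the internal direct sum of the two subspaces Λ²₇ := { ι_vρ₀ : v ∈ ℝ⁷ } and Λ²₁₄ := { α : the skew-adjoint endomorphism A_α of ℝ⁷ determined by ⟨A_α x, y⟩ = α(x,y) annihilates ρ₀ }; moreover Λ²₇ has dimension 7 (so v ↦ ι_vρ₀ is injective) and Λ²₁₄ has dimension 14. -/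
/-!
Contracting a 2-form with `ρ₀`, `α ↦ 6⁻¹ ∑ α(eᵢ, eⱼ) eᵢ × eⱼ`, is a left inverse of `v ↦ ι_v ρ₀`;
hence `Λ²₇`, the range of `ι`, and the kernel of the contraction are complementary, of
dimensions `7` and `21 - 7`. That kernel is `Λ²₁₄` because the derivation action of `A_α` on `ρ₀`
equals that of `A_{ι_w ρ₀} = w × ·`, where `w` is the contraction of `α` (a polynomial identity),
and the action of `w × ·` on `ρ₀` vanishes only for `w = 0`.
-/
noncomputable section

/-- The skew-adjoint endomorphism `A_α` of an alternating 2-form `α`, determined by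
`⟨A_α x, y⟩ = α (x, y)`; its `i`-th coordinate at `x` is `α (x, eᵢ)`. -/
def aOf (α : AlternatingMap ℝ (Fin 7 → ℝ) ℝ (Fin 2)) (x : Fin 7 → ℝ) : Fin 7 → ℝ :=
  fun i => α ![x, Pi.single i 1]

open Module LinearMap

theorem LinearMap.isCompl_range_ker_of_comp_eq_id {R V W : Type*} [Ring R] [AddCommGroup V]
    [Module R V] [AddCommGroup W] [Module R W] {f : V →ₗ[R] W} {g : W →ₗ[R] V}
    (h : g ∘ₗ f = LinearMap.id) : IsCompl (range f) (ker g) := by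
  have hf : ker f = ⊥ := ker_eq_bot_of_inverse h
  have hg : range g = ⊤ := range_eq_top.2 fun v => ⟨f v, LinearMap.congr_fun h v⟩
  have hidem : IsIdempotentElem (f ∘ₗ g) := by
    change (f ∘ₗ g) ∘ₗ (f ∘ₗ g) = f ∘ₗ g
    rw [comp_assoc, ← comp_assoc g, h, id_comp]
  simpa [range_comp_of_range_eq_top f hg, ker_comp_of_ker_eq_bot g hf] using hidem.isCompl

section AlternatingForms

variable {K V : Type*} [Field K] [AddCommGroup V] [Module K V] [FiniteDimensional K V]

instance AlternatingMap.instFiniteDimensionalFin (n : ℕ) :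
    FiniteDimensional K (V [⋀^Fin n]→ₗ[K] K) :=
  Module.Finite.equiv exteriorPower.alternatingMapLinearEquiv.symm

theorem AlternatingMap.finrank_fin (n : ℕ) :
    finrank K (V [⋀^Fin n]→ₗ[K] K) = (finrank K V).choose n := by
  rw [exteriorPower.alternatingMapLinearEquiv.finrank_eq, finrank_linearMap_self,
    exteriorPower.finrank_eq]

end AlternatingForms

theorem AlternatingMap.ext_fin_two {R M N : Type*} [CommSemiring R] [AddCommMonoid M]
    [Module R M] [AddCommMonoid N] [Module R N] {α β : AlternatingMap R M N (Fin 2)}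
    (h : ∀ x y, α ![x, y] = β ![x, y]) : α = β := by
  ext m
  have hm : m = ![m 0, m 1] := by funext k; fin_cases k <;> rfl
  rw [hm, h]

theorem AlternatingMap.map_fin_two_swap {R M N : Type*} [CommRing R] [AddCommMonoid M]
    [Module R M] [AddCommGroup N] [Module R N] (α : AlternatingMap R M N (Fin 2)) (x y : M) :
    α ![y, x] = -α ![x, y] := by
  have h : ![x, y] ∘ Equiv.swap (0 : Fin 2) 1 = ![y, x] := by
    funext k; fin_cases k <;> rfl
  rw [← h, α.map_swap _ (by decide)]

theorem aOf_apply_eq_sum (α : AlternatingMap ℝ (Fin 7 → ℝ) ℝ (Fin 2)) (x : Fin 7 → ℝ)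
    (i : Fin 7) :
    aOf α x i = ∑ p, x p * α ![Pi.single p 1, Pi.single i 1] := by
  have hupd (z : Fin 7 → ℝ) : Function.update ![0, Pi.single i 1] 0 z = ![z, Pi.single i 1] :=
    Fin.update_cons_zero ..
  have h := α.map_update_sum Finset.univ 0 (fun p => x p • Pi.single p 1) ![0, Pi.single i 1]
  simp only [hupd, ← pi_eq_sum_univ', AlternatingMap.map_vecCons_smul, smul_eq_mul] at h
  exact h

def tripleAlternating (i j k : Fin 7) : AlternatingMap ℝ (Fin 7 → ℝ) ℝ (Fin 3) :=
  Matrix.detRowAlternating.compLinearMap (funLeft ℝ ℝ ![i, j, k])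

theorem tripleAlternating_apply (i j k : Fin 7) (x y z : Fin 7 → ℝ) :
    tripleAlternating i j k ![x, y, z] = tripleForm i j k x y z := by
  change Matrix.det (Matrix.of fun a b => ![x, y, z] a (![i, j, k] b)) = _
  rw [Matrix.det_fin_three]
  simp [tripleForm]
  ring

def rhoAlternating : AlternatingMap ℝ (Fin 7 → ℝ) ℝ (Fin 3) :=
  tripleAlternating 0 1 2 + tripleAlternating 0 3 4 + tripleAlternating 0 5 6
    + tripleAlternating 1 3 5 - tripleAlternating 1 4 6 - tripleAlternating 2 3 6
    - tripleAlternating 2 4 5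

theorem rhoAlternating_apply (x y z : Fin 7 → ℝ) : rhoAlternating ![x, y, z] = rho x y z := by
  simp only [rhoAlternating, AlternatingMap.add_apply, AlternatingMap.sub_apply,
    tripleAlternating_apply, rho]

def iotaRho : (Fin 7 → ℝ) →ₗ[ℝ] AlternatingMap ℝ (Fin 7 → ℝ) ℝ (Fin 2) :=
  rhoAlternating.curryLeft

theorem iotaRho_apply (v x y : Fin 7 → ℝ) : iotaRho v ![x, y] = rho v x y := by
  rw [iotaRho, AlternatingMap.curryLeft_apply_apply]
  exact rhoAlternating_apply v x y

theorem mem_range_iotaRho_iff (α : AlternatingMap ℝ (Fin 7 → ℝ) ℝ (Fin 2)) :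
    α ∈ range iotaRho ↔ ∃ v : Fin 7 → ℝ, ∀ x y : Fin 7 → ℝ, α ![x, y] = rho v x y := by
  refine exists_congr fun v => ⟨fun h x y => h ▸ iotaRho_apply v x y, fun h => ?_⟩
  exact AlternatingMap.ext_fin_two fun x y => (iotaRho_apply v x y).trans (h x y).symm

/-- Since `∑ i, ∑ j, ρ₀ (eᵢ, eⱼ, eₖ) ρ₀ (eᵢ, eⱼ, eₗ) = 6 δₖₗ`, the factor `6⁻¹` makes this a left
inverse of `iotaRho`. -/
def contractRho : AlternatingMap ℝ (Fin 7 → ℝ) ℝ (Fin 2) →ₗ[ℝ] (Fin 7 → ℝ) where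
  toFun α := (6 : ℝ)⁻¹ •
    ∑ i, ∑ j, α ![Pi.single i 1, Pi.single j 1] • cross (Pi.single i 1) (Pi.single j 1)
  map_add' α β := by simp [add_smul, Finset.sum_add_distrib]
  map_smul' c α := by simp [Finset.smul_sum, smul_smul, mul_left_comm]

theorem contractRho_iotaRho (v : Fin 7 → ℝ) : contractRho (iotaRho v) = v := by
  funext k
  simp only [contractRho, LinearMap.coe_mk, AddHom.coe_mk, iotaRho_apply]
  fin_cases k <;>
  · simp [Fin.sum_univ_seven, cross, rho, tripleForm, Pi.single_apply]
    ring

def rhoDeriv (A : (Fin 7 → ℝ) → Fin 7 → ℝ) (x y z : Fin 7 → ℝ) : ℝ :=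
  rho (A x) y z + rho x (A y) z + rho x y (A z)

set_option maxRecDepth 100000 in
set_option maxHeartbeats 1000000 in
theorem rhoDeriv_aOf (α : AlternatingMap ℝ (Fin 7 → ℝ) ℝ (Fin 2)) :
    rhoDeriv (aOf α) = rhoDeriv (cross (contractRho α)) := by
  -- Coefficients of the form `s i j - s j i` make skew-symmetry automatic, so that the claim
  -- becomes a polynomial identity in free variables.
  obtain ⟨s, hs⟩ : ∃ s : Fin 7 → Fin 7 → ℝ,
      ∀ i j, α ![Pi.single i 1, Pi.single j 1] = s i j - s j i :=
    ⟨fun i j => α ![Pi.single i 1, Pi.single j 1] / 2, fun i j => by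
      show _ = _ / 2 - _ / 2
      rw [α.map_fin_two_swap (Pi.single i 1)]
      ring⟩
  have hA : aOf α = fun x i => ∑ p, x p * (s p i - s i p) := by
    funext x i
    simp only [aOf_apply_eq_sum, hs]
  funext x y z
  simp only [hA, rhoDeriv, contractRho, LinearMap.coe_mk, AddHom.coe_mk, hs]
  simp [Fin.sum_univ_seven, cross, rho, tripleForm]
  ring

theorem eq_zero_of_rhoDeriv_cross_eq_zero {w : Fin 7 → ℝ} (h : rhoDeriv (cross w) = 0) :
    w = 0 := by
  have h' (a b c : Fin 7) :
      rhoDeriv (cross w) (Pi.single a 1) (Pi.single b 1) (Pi.single c 1) = 0 := by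
    rw [h]; rfl
  -- `t l` completes `l` to a coassociative 4-plane, on which `rhoDeriv (cross w)` is `±3 w l`.
  let t : Fin 7 → Fin 7 × Fin 7 × Fin 7 :=
    ![(1, 3, 6), (0, 3, 6), (0, 3, 5), (0, 1, 6), (0, 1, 5), (0, 1, 4), (0, 1, 3)]
  funext l
  have hl := h' (t l).1 (t l).2.1 (t l).2.2
  fin_cases l <;> simp [t, rhoDeriv, cross, rho, tripleForm] at hl ⊢ <;> linarith

theorem contractRho_eq_zero_iff (α : AlternatingMap ℝ (Fin 7 → ℝ) ℝ (Fin 2)) :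
    contractRho α = 0 ↔ rhoDeriv (aOf α) = 0 := by
  rw [rhoDeriv_aOf]
  refine ⟨fun h => ?_, eq_zero_of_rhoDeriv_cross_eq_zero⟩
  funext x y z
  simp [h, rhoDeriv, cross, rho, tripleForm]

/-- the 21-dimensional space of alternating 2-forms on ℝ⁷ is the internal
direct sum of `Λ²₇ = {i_v rho : v ∈ ℝ⁷}` (of dimension 7, with `v ↦ i_v rho` injective)
and `Λ²₁₄ = {α : A_α annihilates rho}` (of dimension 14). -/
theorem stmt12 :
    ∃ S7 S14 : Submodule ℝ (AlternatingMap ℝ (Fin 7 → ℝ) ℝ (Fin 2)),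
      (∀ α : AlternatingMap ℝ (Fin 7 → ℝ) ℝ (Fin 2),
        α ∈ S7 ↔ ∃ v : Fin 7 → ℝ, ∀ x y : Fin 7 → ℝ, α ![x, y] = rho v x y) ∧
      (∀ α : AlternatingMap ℝ (Fin 7 → ℝ) ℝ (Fin 2),
        α ∈ S14 ↔ ∀ x y z : Fin 7 → ℝ,
          rho (aOf α x) y z + rho x (aOf α y) z + rho x y (aOf α z) = 0) ∧
      IsCompl S7 S14 ∧
      Module.finrank ℝ (AlternatingMap ℝ (Fin 7 → ℝ) ℝ (Fin 2)) = 21 ∧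
      Module.finrank ℝ S7 = 7 ∧
      Module.finrank ℝ S14 = 14 ∧
      (∀ v w : Fin 7 → ℝ, (∀ x y : Fin 7 → ℝ, rho v x y = rho w x y) → v = w) := by
  have hdim : finrank ℝ (AlternatingMap ℝ (Fin 7 → ℝ) ℝ (Fin 2)) = 21 := by
    rw [AlternatingMap.finrank_fin, finrank_fin_fun]
    rfl
  have hinv : contractRho ∘ₗ iotaRho = LinearMap.id := LinearMap.ext contractRho_iotaRho
  have hcompl := isCompl_range_ker_of_comp_eq_id hinv
  have hinj : Function.Injective iotaRho := Function.LeftInverse.injective contractRho_iotaRho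
  have hrange : finrank ℝ (range iotaRho) = 7 := by rw [finrank_range_of_inj hinj, finrank_fin_fun]
  refine ⟨range iotaRho, ker contractRho, mem_range_iotaRho_iff, fun α => ?_, hcompl,
    hdim, hrange, ?_, fun v w h => ?_⟩
  · rw [mem_ker, contractRho_eq_zero_iff]
    simp only [funext_iff, rhoDeriv, Pi.zero_apply]
  · have := Submodule.finrank_add_eq_of_isCompl hcompl
    rw [hrange, hdim] at this
    omega
  · exact hinj (AlternatingMap.ext_fin_two fun x y => by rw [iotaRho_apply, iotaRho_apply, h])
end
end

section
/- Let v, w ∈ ℝ⁷ be orthonormal vectors and ⋆ the cross product defined from the standard G₂ 3-form ρ₀. Then v⋆w is a unit vector orthogonal to both v and w, and the triple (v, w, v⋆w) multiplies like the quaternion units i, j, k: (v⋆w)⋆v = w, w⋆(v⋆w) = v, and v⋆w = −w⋆v. Consequently the 3-dimensional subspace spanned by v, w, v⋆w is closed under ⋆ (it is an associative subspace of ℝ⁷). -/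
noncomputable section

lemma cross_sq (x y : Fin 7 → ℝ) :
    inn (cross x y) (cross x y) = inn x x * inn y y - inn x y * inn x y := by
  simp [inn, cross, rho, tripleForm, Fin.sum_univ_seven, Pi.single_apply]
  ring

lemma inn_cross_left (x y : Fin 7 → ℝ) : inn x (cross x y) = 0 := by
  simp [inn, cross, rho, tripleForm, Fin.sum_univ_seven, Pi.single_apply]; ring

lemma inn_cross_right (x y : Fin 7 → ℝ) : inn y (cross x y) = 0 := by
  simp [inn, cross, rho, tripleForm, Fin.sum_univ_seven, Pi.single_apply]; ring

lemma cross_antisymm (x y : Fin 7 → ℝ) : cross x y = -(cross y x) := by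
  funext i; fin_cases i <;>
    simp [cross, rho, tripleForm, Pi.single_apply] <;> ring

lemma cross_self7 (x : Fin 7 → ℝ) : cross x x = 0 := by
  funext i; fin_cases i <;>
    simp [cross, rho, tripleForm, Pi.single_apply] <;> ring

lemma cross_triple (x y : Fin 7 → ℝ) :
    cross (cross x y) x = inn x x • y - inn x y • x := by
  funext i; fin_cases i <;>
    · simp [inn, cross, rho, tripleForm, Fin.sum_univ_seven, Pi.single_apply]
      ring

lemma cross_triple' (x y : Fin 7 → ℝ) :
    cross y (cross x y) = inn y y • x - inn x y • y := by
  funext i; fin_cases i <;>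
    · simp [inn, cross, rho, tripleForm, Fin.sum_univ_seven, Pi.single_apply]
      ring

lemma cross_add_right (x a b : Fin 7 → ℝ) : cross x (a + b) = cross x a + cross x b := by
  funext i; simp [cross, rho, tripleForm]; ring

lemma cross_smul_right (c : ℝ) (x a : Fin 7 → ℝ) : cross x (c • a) = c • cross x a := by
  funext i; simp [cross, rho, tripleForm]; ring

lemma cross_add_left (a b y : Fin 7 → ℝ) : cross (a + b) y = cross a y + cross b y := by
  funext i; simp [cross, rho, tripleForm]; ring

lemma cross_smul_left (c : ℝ) (a y : Fin 7 → ℝ) : cross (c • a) y = c • cross a y := by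
  funext i; simp [cross, rho, tripleForm]; ring

lemma cross_zero_right (x : Fin 7 → ℝ) : cross x 0 = 0 := by
  funext i; simp [cross, rho, tripleForm]

lemma cross_zero_left (y : Fin 7 → ℝ) : cross 0 y = 0 := by
  funext i; simp [cross, rho, tripleForm]

/-- for orthonormal `v, w`, the vector `v ⋆ w` is a unit vector orthogonal
to `v` and `w`, the triple `(v, w, v⋆w)` multiplies like the quaternion units `i, j, k`,
and the 3-dimensional subspace spanned by `v, w, v⋆w` is closed under `⋆` (it is an
associative subspace of ℝ⁷). -/
theorem stmt15 (v w : Fin 7 → ℝ) (hv : inn v v = 1) (hw : inn w w = 1)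
    (hvw : inn v w = 0) :
    inn (cross v w) (cross v w) = 1 ∧
    inn v (cross v w) = 0 ∧
    inn w (cross v w) = 0 ∧
    cross (cross v w) v = w ∧
    cross w (cross v w) = v ∧
    cross v w = -(cross w v) ∧
    (∀ a b : Fin 7 → ℝ,
      a ∈ Submodule.span ℝ ({v, w, cross v w} : Set (Fin 7 → ℝ)) →
      b ∈ Submodule.span ℝ ({v, w, cross v w} : Set (Fin 7 → ℝ)) →
      cross a b ∈ Submodule.span ℝ ({v, w, cross v w} : Set (Fin 7 → ℝ))) := by
  have h4 : cross (cross v w) v = w := by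
    rw [cross_triple, hv, hvw]; simp
  have h5 : cross w (cross v w) = v := by
    rw [cross_triple', hw, hvw]; simp
  refine ⟨by rw [cross_sq, hv, hw, hvw]; ring, inn_cross_left v w, inn_cross_right v w,
    h4, h5, cross_antisymm v w, ?_⟩
  set u := cross v w with hu
  set S := Submodule.span ℝ ({v, w, u} : Set (Fin 7 → ℝ)) with hS
  have hvS : v ∈ S := Submodule.subset_span (by simp)
  have hwS : w ∈ S := Submodule.subset_span (by simp)
  have huS : u ∈ S := Submodule.subset_span (by simp)
  have hgen : ∀ x ∈ ({v, w, u} : Set (Fin 7 → ℝ)), ∀ y ∈ ({v, w, u} : Set (Fin 7 → ℝ)),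
      cross x y ∈ S := by
    intro x hx y hy
    simp only [Set.mem_insert_iff, Set.mem_singleton_iff] at hx hy
    rcases hx with rfl | rfl | rfl <;> rcases hy with rfl | rfl | rfl
    · rw [cross_self7]; exact zero_mem S
    · exact huS
    · rw [cross_antisymm, h4]; exact neg_mem hwS
    · rw [cross_antisymm, ← hu]; exact neg_mem huS
    · rw [cross_self7]; exact zero_mem S
    · rw [h5]; exact hvS
    · rw [h4]; exact hwS
    · rw [cross_antisymm, h5]; exact neg_mem hvS
    · rw [cross_self7]; exact zero_mem S
  have hleft : ∀ x ∈ ({v, w, u} : Set (Fin 7 → ℝ)), ∀ b ∈ S, cross x b ∈ S := by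
    intro x hx b hb
    induction hb using Submodule.span_induction with
    | mem y hy => exact hgen x hx y hy
    | zero => rw [cross_zero_right]; exact zero_mem S
    | add b c _ _ ihb ihc => rw [cross_add_right]; exact add_mem ihb ihc
    | smul c b _ ih => rw [cross_smul_right]; exact Submodule.smul_mem S c ih
  intro a b ha hb
  induction ha using Submodule.span_induction with
  | mem x hx => exact hleft x hx b hb
  | zero => rw [cross_zero_left]; exact zero_mem S
  | add a c _ _ iha ihc => rw [cross_add_left]; exact add_mem iha ihc
  | smul c a _ ih => rw [cross_smul_left]; exact Submodule.smul_mem S c ih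
end
end
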